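/- Let N ∈ {3,4}, let U_n be the truncated Aubin–Talenti bubbles, and set K_N := ∫_{ℝ^N} |∇U(x)|² dx, where U(x) := A_N (1+|x|²)^{−(N−2)/2} is the full Aubin–Talenti bubble. Then there exists C > 0 such that for all integers n ≥ 1, |∫_{ℝ^N} |∇U_n(x)|² dx − K_N| ≤ C · n^{−(N−2)}. -/

import Mathlib

open Real MeasureTheory

/-- The radial profile of the truncated Aubin–Talenti bubble. -/
noncomputable def bubbleProfile (N n : ℕ) (r : ℝ) : ℝ :=
  if r < 1 then
    ((N : ℝ) * ((N : ℝ) - 2)) ^ (((N : ℝ) - 2) / 4)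
      * ((n : ℝ) / (1 + (n : ℝ) ^ 2 * r ^ 2)) ^ (((N : ℝ) - 2) / 2)
  else if r < 2 then
    ((N : ℝ) * ((N : ℝ) - 2)) ^ (((N : ℝ) - 2) / 4)
      * ((n : ℝ) / (1 + (n : ℝ) ^ 2)) ^ (((N : ℝ) - 2) / 2) * (2 - r)
  else 0

/-- The truncated Aubin–Talenti bubble `U_n` on `ℝ^N`. -/
noncomputable def Ubub (N n : ℕ) (x : EuclideanSpace ℝ (Fin N)) : ℝ :=
  bubbleProfile N n ‖x‖

/-- The full Aubin–Talenti bubble `U(x) = A_N (1+|x|²)^{-(N-2)/2}` on `ℝ^N`. -/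
noncomputable def Ufull (N : ℕ) (x : EuclideanSpace ℝ (Fin N)) : ℝ :=
  ((N : ℝ) * ((N : ℝ) - 2)) ^ (((N : ℝ) - 2) / 4)
    * (1 + ‖x‖ ^ 2) ^ (-(((N : ℝ) - 2) / 2))

/-!
In polar coordinates both Dirichlet energies become one-dimensional integrals
`∫₀^∞ r^{N-1} f'(r)² dr` of the radial profiles. On `r < 1` the truncated profile is the rescaled
bubble `n^{(N-2)/2} U(n r)`, and this rescaling preserves the energy, so the core contributes
exactly `∫₀ⁿ` of the full energy density. What remains is the annulus term, of size
`(n/(1+n²))^{N-2} ≤ n^{-(N-2)}`, against the tail `∫ₙ^∞` of the full density, which decays like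
`s^{1-N}` and hence is also `O(n^{-(N-2)})`.
-/

open Set Metric Module

section Radial

variable {E : Type*} [NormedAddCommGroup E] [InnerProductSpace ℝ E] [Nontrivial E]

theorem norm_fderiv_comp_norm {f : ℝ → ℝ} {x : E} (hx : x ≠ 0)
    (hf : DifferentiableAt ℝ f ‖x‖) :
    ‖fderiv ℝ (fun y : E => f ‖y‖) x‖ = |deriv f ‖x‖| := by
  have hnorm : DifferentiableAt ℝ (‖·‖) x :=
    (contDiffAt_norm ℝ hx (n := 1)).differentiableAt one_ne_zero
  have h : HasFDerivAt (fun y : E => f ‖y‖) (deriv f ‖x‖ • fderiv ℝ (‖·‖) x) x :=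
    hf.hasDerivAt.comp_hasFDerivAt x hnorm.hasFDerivAt
  rw [h.fderiv, norm_smul, norm_fderiv_norm hnorm, mul_one, Real.norm_eq_abs]

noncomputable def radialEnergyDensity (f : ℝ → ℝ) (d : ℕ) (r : ℝ) : ℝ :=
  r ^ (d - 1) * deriv f r ^ 2

noncomputable def radialEnergy (f : ℝ → ℝ) (d : ℕ) : ℝ :=
  ∫ r in Ioi 0, radialEnergyDensity f d r

variable [FiniteDimensional ℝ E] [MeasurableSpace E] [BorelSpace E]
  (μ : Measure E) [μ.IsAddHaarMeasure]

theorem integral_norm_fderiv_comp_norm_sq {f : ℝ → ℝ} {S : Set ℝ} (hS : S.Countable)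
    (hf : ∀ r, 0 < r → r ∉ S → DifferentiableAt ℝ f r) :
    ∫ x, ‖fderiv ℝ (fun y : E => f ‖y‖) x‖ ^ 2 ∂μ
      = finrank ℝ E * μ.real (ball 0 1) * radialEnergy f (finrank ℝ E) := by
  have hnull : μ (⋃ r ∈ insert 0 S, sphere (0 : E) r) = 0 :=
    (measure_biUnion_null_iff (hS.insert 0)).2 fun r _ => μ.addHaar_sphere 0 r
  have hae : ∀ᵐ x ∂μ, ‖fderiv ℝ (fun y : E => f ‖y‖) x‖ ^ 2 = deriv f ‖x‖ ^ 2 := by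
    filter_upwards [measure_eq_zero_iff_ae_notMem.1 hnull] with x hx
    simp only [mem_iUnion, mem_sphere_zero_iff_norm, mem_insert_iff, exists_prop,
      exists_eq_or_imp, exists_eq_right', not_or, norm_eq_zero] at hx
    rw [norm_fderiv_comp_norm hx.1 (hf _ (norm_pos_iff.2 hx.1) hx.2), sq_abs]
  rw [integral_congr_ae hae, integral_fun_norm_addHaar μ (fun r => deriv f r ^ 2),
    nsmul_eq_mul, smul_eq_mul, mul_assoc]
  simp only [radialEnergy, radialEnergyDensity, smul_eq_mul]

end Radial

noncomputable def bubbleConst (N : ℕ) : ℝ := ((N : ℝ) * ((N : ℝ) - 2)) ^ (((N : ℝ) - 2) / 4)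

theorem bubbleConst_pos {N : ℕ} (hN : 2 < N) : 0 < bubbleConst N := by
  have : (2 : ℝ) < N := by exact_mod_cast hN
  exact Real.rpow_pos_of_pos (by nlinarith) _

noncomputable def fullProfile (N : ℕ) (r : ℝ) : ℝ :=
  bubbleConst N * (1 + r ^ 2) ^ (-(((N : ℝ) - 2) / 2))

theorem hasDerivAt_fullProfile (N : ℕ) (r : ℝ) :
    HasDerivAt (fullProfile N)
      (-((N : ℝ) - 2) * bubbleConst N * r * (1 + r ^ 2) ^ (-(N : ℝ) / 2)) r := by
  have h := (((hasDerivAt_pow 2 r).const_add 1).rpow_const (p := -(((N : ℝ) - 2) / 2))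
    (Or.inl (by positivity))).const_mul (bubbleConst N)
  refine h.congr_deriv ?_
  rw [show -(((N : ℝ) - 2) / 2) - 1 = -(N : ℝ) / 2 by ring]
  push_cast
  ring

theorem deriv_fullProfile (N : ℕ) :
    deriv (fullProfile N)
      = fun r => -((N : ℝ) - 2) * bubbleConst N * r * (1 + r ^ 2) ^ (-(N : ℝ) / 2) :=
  funext fun r => (hasDerivAt_fullProfile N r).deriv

theorem continuous_radialEnergyDensity_fullProfile (N : ℕ) :
    Continuous (radialEnergyDensity (fullProfile N) N) := by
  unfold radialEnergyDensity
  rw [deriv_fullProfile]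
  have : Continuous fun r : ℝ => (1 + r ^ 2) ^ (-(N : ℝ) / 2) :=
    (continuous_const.add (continuous_pow 2)).rpow_const fun r =>
      Or.inl (by positivity : (0 : ℝ) < 1 + r ^ 2).ne'
  fun_prop

theorem radialEnergyDensity_fullProfile_le {N : ℕ} (hN : 1 ≤ N) {s : ℝ} (hs : 0 < s) :
    radialEnergyDensity (fullProfile N) N s
      ≤ bubbleConst N ^ 2 * ((N : ℝ) - 2) ^ 2 * s ^ (1 - (N : ℝ)) := by
  have hdecay : (1 + s ^ 2) ^ (-(N : ℝ) / 2) ≤ s ^ (-(N : ℝ)) := by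
    calc (1 + s ^ 2) ^ (-(N : ℝ) / 2) ≤ (s ^ 2) ^ (-(N : ℝ) / 2) :=
          Real.rpow_le_rpow_of_nonpos (by positivity) (by linarith) (by
            have : (0 : ℝ) ≤ N := N.cast_nonneg
            linarith)
      _ = s ^ (-(N : ℝ)) := by
          rw [← Real.rpow_natCast, ← Real.rpow_mul hs.le]
          ring_nf
  have hpow : s ^ (N - 1) * s ^ 2 * (s ^ (-(N : ℝ))) ^ 2 = s ^ (1 - (N : ℝ)) := by
    obtain ⟨k, rfl⟩ : ∃ k, N = k + 1 := ⟨N - 1, by omega⟩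
    rw [Nat.add_sub_cancel, ← Real.rpow_natCast, ← Real.rpow_natCast s 2,
      ← Real.rpow_mul_natCast hs.le, ← Real.rpow_add hs, ← Real.rpow_add hs]
    congr 1
    push_cast
    ring
  calc radialEnergyDensity (fullProfile N) N s
      = bubbleConst N ^ 2 * ((N : ℝ) - 2) ^ 2 * (s ^ (N - 1) * s ^ 2
          * ((1 + s ^ 2) ^ (-(N : ℝ) / 2)) ^ 2) := by
        rw [radialEnergyDensity, deriv_fullProfile]
        ring
    _ ≤ bubbleConst N ^ 2 * ((N : ℝ) - 2) ^ 2
          * (s ^ (N - 1) * s ^ 2 * (s ^ (-(N : ℝ))) ^ 2) := by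
        gcongr
    _ = bubbleConst N ^ 2 * ((N : ℝ) - 2) ^ 2 * s ^ (1 - (N : ℝ)) := by rw [hpow]

theorem integrableOn_Ioi_radialEnergyDensity_fullProfile {N : ℕ} (hN : 3 ≤ N) {a : ℝ}
    (ha : 0 < a) : IntegrableOn (radialEnergyDensity (fullProfile N) N) (Ioi a) := by
  have hN' : (3 : ℝ) ≤ N := by exact_mod_cast hN
  refine Integrable.mono'
    ((integrableOn_Ioi_rpow_of_lt (a := 1 - (N : ℝ)) (by linarith) ha).const_mul
      (bubbleConst N ^ 2 * ((N : ℝ) - 2) ^ 2))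
    (continuous_radialEnergyDensity_fullProfile N).aestronglyMeasurable ?_
  filter_upwards [ae_restrict_mem measurableSet_Ioi] with s (hs : a < s)
  have hs0 : 0 < s := ha.trans hs
  rw [Real.norm_eq_abs, abs_of_nonneg (by unfold radialEnergyDensity; positivity)]
  exact radialEnergyDensity_fullProfile_le (by omega) hs0

theorem setIntegral_Ioi_radialEnergyDensity_fullProfile_le {N : ℕ} (hN : 3 ≤ N) {a : ℝ}
    (ha : 0 < a) :
    ∫ s in Ioi a, radialEnergyDensity (fullProfile N) N s
      ≤ bubbleConst N ^ 2 * ((N : ℝ) - 2) * a ^ (-((N : ℝ) - 2)) := by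
  have hN' : (3 : ℝ) ≤ N := by exact_mod_cast hN
  calc ∫ s in Ioi a, radialEnergyDensity (fullProfile N) N s
      ≤ ∫ s in Ioi a, bubbleConst N ^ 2 * ((N : ℝ) - 2) ^ 2 * s ^ (1 - (N : ℝ)) :=
        setIntegral_mono_on (integrableOn_Ioi_radialEnergyDensity_fullProfile hN ha)
          ((integrableOn_Ioi_rpow_of_lt (by linarith) ha).const_mul _) measurableSet_Ioi
          fun s hs => radialEnergyDensity_fullProfile_le (by omega) (ha.trans hs)
    _ = bubbleConst N ^ 2 * ((N : ℝ) - 2) * a ^ (-((N : ℝ) - 2)) := by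
        rw [integral_const_mul, integral_Ioi_rpow_of_lt (by linarith) ha,
          show 1 - (N : ℝ) + 1 = -((N : ℝ) - 2) by ring]
        field_simp

theorem radialEnergy_fullProfile_eq {N : ℕ} (hN : 3 ≤ N) {a : ℝ} (ha : 0 < a) :
    radialEnergy (fullProfile N) N
      = (∫ s in 0..a, radialEnergyDensity (fullProfile N) N s)
        + ∫ s in Ioi a, radialEnergyDensity (fullProfile N) N s :=
  (intervalIntegral.integral_interval_add_Ioi'
    ((continuous_radialEnergyDensity_fullProfile N).intervalIntegrable 0 a)
    (integrableOn_Ioi_radialEnergyDensity_fullProfile hN ha)).symm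

noncomputable def bubbleSlope (N n : ℕ) : ℝ :=
  bubbleConst N * ((n : ℝ) / (1 + (n : ℝ) ^ 2)) ^ (((N : ℝ) - 2) / 2)

theorem bubbleProfile_eq_of_lt_one (N n : ℕ) {r : ℝ} (hr : r < 1) :
    bubbleProfile N n r = (n : ℝ) ^ (((N : ℝ) - 2) / 2) * fullProfile N (n * r) := by
  have hpos : (0 : ℝ) < 1 + (n : ℝ) ^ 2 * r ^ 2 := by positivity
  rw [bubbleProfile, if_pos hr, fullProfile, Real.div_rpow n.cast_nonneg hpos.le,
    Real.rpow_neg (by positivity), mul_pow, bubbleConst]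
  ring

theorem hasDerivAt_bubbleProfile_of_lt_one (N n : ℕ) {r : ℝ} (hr : r < 1) :
    HasDerivAt (bubbleProfile N n)
      ((n : ℝ) ^ (((N : ℝ) - 2) / 2) * (deriv (fullProfile N) (n * r) * n)) r := by
  have h := (((hasDerivAt_fullProfile N (n * r)).differentiableAt.hasDerivAt).comp r
    ((hasDerivAt_id r).const_mul (n : ℝ))).const_mul ((n : ℝ) ^ (((N : ℝ) - 2) / 2))
  simp only [mul_one] at h
  refine h.congr_of_eventuallyEq ?_
  filter_upwards [Iio_mem_nhds hr] with t ht
  exact bubbleProfile_eq_of_lt_one N n ht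

theorem hasDerivAt_bubbleProfile_of_mem_Ioo (N n : ℕ) {r : ℝ} (hr : r ∈ Ioo 1 2) :
    HasDerivAt (bubbleProfile N n) (-bubbleSlope N n) r := by
  have h := ((hasDerivAt_id r).const_sub 2).const_mul (bubbleSlope N n)
  simp only [mul_neg, mul_one] at h
  refine h.congr_of_eventuallyEq ?_
  filter_upwards [Ioo_mem_nhds hr.1 hr.2] with t ht
  rw [bubbleProfile, if_neg (by linarith [ht.1]), if_pos ht.2, bubbleSlope, bubbleConst]
  rfl

theorem hasDerivAt_bubbleProfile_of_two_lt (N n : ℕ) {r : ℝ} (hr : 2 < r) :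
    HasDerivAt (bubbleProfile N n) 0 r := by
  refine (hasDerivAt_const r 0).congr_of_eventuallyEq ?_
  filter_upwards [Ioi_mem_nhds hr] with t (ht : 2 < t)
  rw [bubbleProfile, if_neg (by linarith), if_neg (by linarith)]

theorem differentiableAt_bubbleProfile (N n : ℕ) {r : ℝ} (hr : r ∉ ({1, 2} : Set ℝ)) :
    DifferentiableAt ℝ (bubbleProfile N n) r := by
  simp only [mem_insert_iff, mem_singleton_iff, not_or] at hr
  rcases lt_or_gt_of_ne hr.1 with h1 | h1
  · exact (hasDerivAt_bubbleProfile_of_lt_one N n h1).differentiableAt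
  rcases lt_or_gt_of_ne hr.2 with h2 | h2
  · exact (hasDerivAt_bubbleProfile_of_mem_Ioo N n ⟨h1, h2⟩).differentiableAt
  · exact (hasDerivAt_bubbleProfile_of_two_lt N n h2).differentiableAt

theorem radialEnergyDensity_bubbleProfile_of_lt_one {N : ℕ} (hN : 2 ≤ N) (n : ℕ) {r : ℝ}
    (hr : r < 1) :
    radialEnergyDensity (bubbleProfile N n) N r
      = n * radialEnergyDensity (fullProfile N) N (n * r) := by
  have hscale : ((n : ℝ) ^ (((N : ℝ) - 2) / 2)) ^ 2 = (n : ℝ) ^ (N - 2) := by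
    rw [← Real.rpow_mul_natCast n.cast_nonneg, ← Real.rpow_natCast, Nat.cast_sub hN]
    push_cast
    ring_nf
  obtain ⟨k, rfl⟩ : ∃ k, N = k + 2 := ⟨N - 2, by omega⟩
  simp only [radialEnergyDensity, (hasDerivAt_bubbleProfile_of_lt_one _ n hr).deriv, mul_pow,
    hscale]
  rw [show k + 2 - 1 = k + 1 by omega, Nat.add_sub_cancel]
  ring

theorem radialEnergy_bubbleProfile {N : ℕ} (hN : 2 ≤ N) (n : ℕ) :
    radialEnergy (bubbleProfile N n) N
      = (∫ s in 0..(n : ℝ), radialEnergyDensity (fullProfile N) N s)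
        + bubbleSlope N n ^ 2 * ∫ r in (1 : ℝ)..2, r ^ (N - 1) := by
  set F := radialEnergyDensity (bubbleProfile N n) N
  have hcore : EqOn F (fun r => n * radialEnergyDensity (fullProfile N) N (n * r)) (Ioo 0 1) :=
    fun r hr => radialEnergyDensity_bubbleProfile_of_lt_one hN n hr.2
  have hannulus : EqOn F (fun r => bubbleSlope N n ^ 2 * r ^ (N - 1)) (Ioo 1 2) := fun r hr => by
    simp only [F, radialEnergyDensity, (hasDerivAt_bubbleProfile_of_mem_Ioo N n hr).deriv]
    ring
  have hout : EqOn F 0 (Ioi 2) := fun r hr => by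
    simp only [F, radialEnergyDensity, (hasDerivAt_bubbleProfile_of_two_lt N n hr).deriv]
    simp
  have hI01 : IntervalIntegrable F volume 0 1 := by
    rw [intervalIntegrable_congr_uIoo (by rwa [uIoo_of_le zero_le_one])]
    exact (continuous_const.mul ((continuous_radialEnergyDensity_fullProfile N).comp
      (continuous_const_mul _))).intervalIntegrable 0 1
  have hI12 : IntervalIntegrable F volume 1 2 := by
    rw [intervalIntegrable_congr_uIoo (by rwa [uIoo_of_le one_le_two])]
    exact (continuous_const.mul (continuous_pow _)).intervalIntegrable 1 2
  have hIoi2 : IntegrableOn F (Ioi 2) := integrableOn_zero.congr_fun hout.symm measurableSet_Ioi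
  calc radialEnergy (bubbleProfile N n) N
      = (∫ r in 0..1, F r) + (∫ r in 1..2, F r) + ∫ r in Ioi 2, F r := by
        rw [intervalIntegral.integral_add_adjacent_intervals hI01 hI12]
        exact (intervalIntegral.integral_interval_add_Ioi' (hI01.trans hI12) hIoi2).symm
    _ = (∫ r in 0..1, n * radialEnergyDensity (fullProfile N) N (n * r))
          + (∫ r in 1..2, bubbleSlope N n ^ 2 * r ^ (N - 1)) + 0 := by
        rw [intervalIntegral.integral_congr_Ioo_of_le zero_le_one hcore,
          intervalIntegral.integral_congr_Ioo_of_le one_le_two hannulus,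
          setIntegral_eq_zero_of_forall_eq_zero hout]
    _ = (∫ s in 0..(n : ℝ), radialEnergyDensity (fullProfile N) N s)
          + bubbleSlope N n ^ 2 * ∫ r in (1 : ℝ)..2, r ^ (N - 1) := by
        rw [intervalIntegral.integral_const_mul, intervalIntegral.mul_integral_comp_mul_left,
          intervalIntegral.integral_const_mul, mul_zero, mul_one, add_zero]

theorem intervalIntegral_pow_pos {a b : ℝ} (ha : 0 < a) (hab : a < b) (k : ℕ) :
    0 < ∫ r in a..b, r ^ k :=
  intervalIntegral.intervalIntegral_pos_of_pos_on ((continuous_pow k).intervalIntegrable a b)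
    (fun _ hr => pow_pos (ha.trans hr.1) k) hab

theorem bubbleSlope_sq_le {N : ℕ} (hN : 2 ≤ N) {n : ℕ} (hn : 1 ≤ n) :
    bubbleSlope N n ^ 2 ≤ bubbleConst N ^ 2 * (n : ℝ) ^ (-((N : ℝ) - 2)) := by
  have hn0 : (0 : ℝ) < n := by exact_mod_cast hn
  have hN' : (0 : ℝ) ≤ (N : ℝ) - 2 := by
    have : (2 : ℝ) ≤ N := by exact_mod_cast hN
    linarith
  have hratio : (n : ℝ) / (1 + (n : ℝ) ^ 2) ≤ (n : ℝ)⁻¹ := by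
    rw [div_le_iff₀ (by positivity), inv_mul_eq_div, le_div_iff₀ hn0]
    nlinarith
  calc bubbleSlope N n ^ 2
      = bubbleConst N ^ 2 * ((n : ℝ) / (1 + (n : ℝ) ^ 2)) ^ ((N : ℝ) - 2) := by
        rw [bubbleSlope, mul_pow, ← Real.rpow_mul_natCast (by positivity)]
        ring_nf
    _ ≤ bubbleConst N ^ 2 * (n : ℝ)⁻¹ ^ ((N : ℝ) - 2) := by gcongr
    _ = bubbleConst N ^ 2 * (n : ℝ) ^ (-((N : ℝ) - 2)) := by
        rw [Real.inv_rpow hn0.le, Real.rpow_neg hn0.le]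

theorem abs_radialEnergy_bubbleProfile_sub_le {N : ℕ} (hN : 3 ≤ N) {n : ℕ} (hn : 1 ≤ n) :
    |radialEnergy (bubbleProfile N n) N - radialEnergy (fullProfile N) N|
      ≤ bubbleConst N ^ 2 * ((∫ r in (1 : ℝ)..2, r ^ (N - 1)) + ((N : ℝ) - 2))
        * (n : ℝ) ^ (-((N : ℝ) - 2)) := by
  have hn0 : (0 : ℝ) < n := by exact_mod_cast hn
  set B := ∫ r in (1 : ℝ)..2, r ^ (N - 1)
  set T := ∫ s in Ioi (n : ℝ), radialEnergyDensity (fullProfile N) N s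
  have hB : 0 ≤ B := (intervalIntegral_pow_pos one_pos one_lt_two _).le
  have hT : 0 ≤ T := setIntegral_nonneg measurableSet_Ioi fun s (hs : (n : ℝ) < s) => by
    have : 0 < s := hn0.trans hs
    unfold radialEnergyDensity
    positivity
  rw [radialEnergy_bubbleProfile (by omega), radialEnergy_fullProfile_eq hN hn0,
    add_sub_add_left_eq_sub]
  calc |bubbleSlope N n ^ 2 * B - T| ≤ bubbleSlope N n ^ 2 * B + T := by
        rw [abs_sub_le_iff]; constructor <;> nlinarith [sq_nonneg (bubbleSlope N n)]
    _ ≤ bubbleConst N ^ 2 * (n : ℝ) ^ (-((N : ℝ) - 2)) * B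
          + bubbleConst N ^ 2 * ((N : ℝ) - 2) * (n : ℝ) ^ (-((N : ℝ) - 2)) :=
        add_le_add (mul_le_mul_of_nonneg_right (bubbleSlope_sq_le (by omega) hn) hB)
          (setIntegral_Ioi_radialEnergyDensity_fullProfile_le hN hn0)
    _ = bubbleConst N ^ 2 * (B + ((N : ℝ) - 2)) * (n : ℝ) ^ (-((N : ℝ) - 2)) := by ring

theorem stmt_8 (N : ℕ) (hN : N = 3 ∨ N = 4) :
    ∃ C : ℝ, 0 < C ∧ ∀ n : ℕ, 1 ≤ n →
      |(∫ x : EuclideanSpace ℝ (Fin N), ‖fderiv ℝ (Ubub N n) x‖ ^ 2)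
          - ∫ x : EuclideanSpace ℝ (Fin N), ‖fderiv ℝ (Ufull N) x‖ ^ 2|
        ≤ C * (n : ℝ) ^ (-((N : ℝ) - 2)) := by
  have h3 : 3 ≤ N := by omega
  have : Nonempty (Fin N) := ⟨⟨0, by omega⟩⟩
  set κ := (N : ℝ) * volume.real (ball (0 : EuclideanSpace ℝ (Fin N)) 1)
  set D := bubbleConst N ^ 2 * ((∫ r in (1 : ℝ)..2, r ^ (N - 1)) + ((N : ℝ) - 2))
  have hκ : 0 < κ := mul_pos (by exact_mod_cast (by omega : 0 < N))
    (ENNReal.toReal_pos (measure_ball_pos volume 0 one_pos).ne' measure_ball_lt_top.ne)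
  have hD : 0 < D := by
    have : (3 : ℝ) ≤ N := by exact_mod_cast h3
    exact mul_pos (pow_pos (bubbleConst_pos (by omega)) 2)
      (add_pos (intervalIntegral_pow_pos one_pos one_lt_two _) (by linarith))
  refine ⟨κ * D, by positivity, fun n hn => ?_⟩
  have hbub := integral_norm_fderiv_comp_norm_sq (E := EuclideanSpace ℝ (Fin N)) volume
    (countable_insert.2 (countable_singleton 2)) fun _ _ => differentiableAt_bubbleProfile N n
  have hfull := integral_norm_fderiv_comp_norm_sq (E := EuclideanSpace ℝ (Fin N)) volume
    countable_empty fun r _ _ => (hasDerivAt_fullProfile N r).differentiableAt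
  rw [finrank_euclideanSpace_fin] at hbub hfull
  rw [show Ubub N n = fun x => bubbleProfile N n ‖x‖ from rfl,
    show Ufull N = fun x => fullProfile N ‖x‖ from rfl, hbub, hfull, ← mul_sub, abs_mul,
    abs_of_pos hκ, mul_assoc κ D]
  exact mul_le_mul_of_nonneg_left (abs_radialEnergy_bubbleProfile_sub_le h3 hn) hκ.le
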